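/- Soundness of SF: for all finite sequences Γ, Δ of formulas, if Γ ⊢_SF Δ, then in every strict finitistic model W, every node forcing all formulas of Γ forces some formula of Δ. -/
import Mathlib


/-- Propositional formulas over a countably infinite set of variables (indexed by ℕ). -/
inductive Fm : Type
  | bot : Fm
  | var : ℕ → Fm
  | and : Fm → Fm → Fm
  | or : Fm → Fm → Fm
  | imp : Fm → Fm → Fm

/-- ¬A abbreviates A → ⊥. -/
def Fm.neg (A : Fm) : Fm := Fm.imp A Fm.bot

/-- ¬¬A. -/
def Fm.dneg (A : Fm) : Fm := (Fm.imp A Fm.bot).imp Fm.bot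

/-- A strict finitistic model: a rooted tree (a partial order with minimum whose
sets of predecessors are linearly ordered), finitely branching, all of whose
branches (chains) are of at most countable length, with an upward-closed valuation
satisfying the finite verification condition and the atomic prevalence condition. -/
structure SFModel where
  K : Type
  le : K → K → Prop
  le_refl : ∀ k, le k k
  le_antisymm : ∀ k l, le k l → le l k → k = l
  le_trans : ∀ k l m, le k l → le l m → le k m
  root : K
  root_le : ∀ k, le root k
  pred_linear : ∀ k l m, le l k → le m k → le l m ∨ le m l
  finitely_branching :
    ∀ k, {l | le k l ∧ k ≠ l ∧ ∀ m, le k m → le m l → m = k ∨ m = l}.Finite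
  branches_countable :
    ∀ C : Set K, (∀ x ∈ C, ∀ y ∈ C, le x y ∨ le y x) → C.Countable
  val : ℕ → Set K
  val_up : ∀ p k l, le k l → k ∈ val p → l ∈ val p
  fin_verif : ∀ k, {p | k ∈ val p}.Finite
  atomic_prev : ∀ p, (∃ k, k ∈ val p) → ∀ l, ∃ l', le l l' ∧ l' ∈ val p

/-- Strict finitistic forcing at a node of a strict finitistic model. -/
def Force (W : SFModel) : W.K → Fm → Prop
  | _, Fm.bot => False
  | k, Fm.var p => k ∈ W.val p
  | k, Fm.and A B => Force W k A ∧ Force W k B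
  | k, Fm.or A B => Force W k A ∨ Force W k B
  | k, Fm.imp A B =>
      ∀ k', W.le k k' → Force W k' A → ∃ k'', W.le k' k'' ∧ Force W k'' B

/-- A is valid in W: every node forces A. -/
def Valid (W : SFModel) (A : Fm) : Prop := ∀ k, Force W k A

/-- A is assertible in W: some node forces A. -/
def Assertible (W : SFModel) (A : Fm) : Prop := ∃ k, Force W k A

/-- A is prevalent in W: above every node some node forces A. -/
def Prevalent (W : SFModel) (A : Fm) : Prop := ∀ k, ∃ k', W.le k k' ∧ Force W k' A

/-- The sequent calculus SF on sequents of finite sequences (lists) of formulas: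
initial sequents ⊥ ⊢ and p ⊢ p, the structural rules of LK (weakening,
contraction, exchange and cut on both sides), and the logical rules of SF. -/
inductive SFDeriv : List Fm → List Fm → Prop
  | botL : SFDeriv [Fm.bot] []
  | ax (p : ℕ) : SFDeriv [Fm.var p] [Fm.var p]
  | wkL (A : Fm) (Γ Δ : List Fm) : SFDeriv Γ Δ → SFDeriv (A :: Γ) Δ
  | wkR (A : Fm) (Γ Δ : List Fm) : SFDeriv Γ Δ → SFDeriv Γ (Δ ++ [A])
  | ctrL (A : Fm) (Γ Δ : List Fm) : SFDeriv (A :: A :: Γ) Δ → SFDeriv (A :: Γ) Δ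
  | ctrR (A : Fm) (Γ Δ : List Fm) : SFDeriv Γ (Δ ++ [A, A]) → SFDeriv Γ (Δ ++ [A])
  | exch (Γ Γ' Δ Δ' : List Fm) :
      SFDeriv Γ Δ → Γ.Perm Γ' → Δ.Perm Δ' → SFDeriv Γ' Δ'
  | cut (A : Fm) (Γ Δ Pi Sg : List Fm) :
      SFDeriv Γ (Δ ++ [A]) → SFDeriv (A :: Pi) Sg → SFDeriv (Γ ++ Pi) (Δ ++ Sg)
  | andL1 (A B : Fm) (Γ Δ : List Fm) :
      SFDeriv (A :: Γ) Δ → SFDeriv (Fm.and B A :: Γ) Δ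
  | andL2 (A B : Fm) (Γ Δ : List Fm) :
      SFDeriv (A :: Γ) Δ → SFDeriv (Fm.and A B :: Γ) Δ
  | andR (A B : Fm) (Γ Δ : List Fm) :
      SFDeriv Γ (Δ ++ [A]) → SFDeriv Γ (Δ ++ [B]) → SFDeriv Γ (Δ ++ [Fm.and A B])
  | orL (A B : Fm) (Γ Δ : List Fm) :
      SFDeriv (A :: Γ) Δ → SFDeriv (B :: Γ) Δ → SFDeriv (Fm.or A B :: Γ) Δ
  | orR1 (A B : Fm) (Γ Δ : List Fm) :
      SFDeriv Γ (Δ ++ [A]) → SFDeriv Γ (Δ ++ [Fm.or A B])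
  | orR2 (A B : Fm) (Γ Δ : List Fm) :
      SFDeriv Γ (Δ ++ [A]) → SFDeriv Γ (Δ ++ [Fm.or B A])
  | impL (A B : Fm) (Γ Δ Pi Sg : List Fm) :
      SFDeriv Γ (Δ ++ [A]) → SFDeriv (B :: Pi) Sg →
      SFDeriv (Γ ++ Fm.imp A B :: Pi) (Δ ++ Sg.map Fm.dneg)
  | impR (A B : Fm) (Γ Δ : List Fm) :
      SFDeriv (Γ ++ [A]) (Fm.dneg B :: Δ) →
      SFDeriv Γ (Fm.imp A B :: Δ.map Fm.dneg)

lemma force_mono (W : SFModel) : ∀ (A : Fm) (k l : W.K), W.le k l → Force W k A → Force W l A := by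
  intro A
  induction A with
  | bot => intro k l _ h; exact h.elim
  | var p => intro k l hkl h; exact W.val_up p k l hkl h
  | and A B ihA ihB => intro k l hkl h; exact ⟨ihA k l hkl h.1, ihB k l hkl h.2⟩
  | or A B ihA ihB =>
      intro k l hkl h
      rcases h with h | h
      · exact Or.inl (ihA k l hkl h)
      · exact Or.inr (ihB k l hkl h)
  | imp A B ihA ihB =>
      intro k l hkl h k' hk' hA
      exact h k' (W.le_trans _ _ _ hkl hk') hA

lemma force_prevalent (W : SFModel) : ∀ (A : Fm), (∃ k, Force W k A) →
    ∀ l, ∃ l', W.le l l' ∧ Force W l' A := by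
  intro A
  induction A with
  | bot => rintro ⟨k, hk⟩; exact hk.elim
  | var p => exact W.atomic_prev p
  | and A B ihA ihB =>
      rintro ⟨k, hkA, hkB⟩ l
      obtain ⟨l1, hl1, hA⟩ := ihA ⟨k, hkA⟩ l
      obtain ⟨l2, hl2, hB⟩ := ihB ⟨k, hkB⟩ l1
      exact ⟨l2, W.le_trans _ _ _ hl1 hl2, force_mono W A l1 l2 hl2 hA, hB⟩
  | or A B ihA ihB =>
      rintro ⟨k, hk | hk⟩ l
      · obtain ⟨l', h1, h2⟩ := ihA ⟨k, hk⟩ l; exact ⟨l', h1, Or.inl h2⟩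
      · obtain ⟨l', h1, h2⟩ := ihB ⟨k, hk⟩ l; exact ⟨l', h1, Or.inr h2⟩
  | imp A B ihA ihB =>
      rintro ⟨k, hk⟩ l
      by_cases hA : ∃ m, Force W m A
      · -- A assertible; then B is assertible, hence prevalent, so A→B valid
        obtain ⟨k1, hk1, hk1A⟩ := ihA hA k
        obtain ⟨k2, hk2, hk2B⟩ := hk k1 hk1 hk1A
        refine ⟨l, W.le_refl l, ?_⟩
        intro k' _ _
        exact ihB ⟨k2, hk2B⟩ k'
      · refine ⟨l, W.le_refl l, ?_⟩
        intro k' _ hA'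
        exact absurd ⟨k', hA'⟩ hA

lemma force_dneg (W : SFModel) (C : Fm) (k : W.K)
    (h : ∀ l, W.le k l → ∃ m, W.le l m ∧ Force W m C) : Force W k (Fm.dneg C) := by
  intro k' hk' hnC
  obtain ⟨m, hm, hmC⟩ := h k' hk'
  obtain ⟨_, _, hf⟩ := hnC m hm hmC
  exact hf.elim

lemma force_dneg_of_assertible (W : SFModel) (C : Fm) (k : W.K)
    (h : ∃ m, Force W m C) : Force W k (Fm.dneg C) :=
  force_dneg W C k (fun l _ => force_prevalent W C h l)

/-- soundness of SF: if Γ ⊢_SF Δ then in every strict finitistic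
model every node forcing all formulas of Γ forces some formula of Δ. -/
theorem sf_soundness (Γ Δ : List Fm) (h : SFDeriv Γ Δ) :
    ∀ (W : SFModel) (k : W.K),
      (∀ A ∈ Γ, Force W k A) → ∃ B ∈ Δ, Force W k B := by
  induction h with
  | botL => intro W k hΓ; exact (hΓ Fm.bot (by simp)).elim
  | ax p => intro W k hΓ; exact ⟨Fm.var p, by simp, hΓ _ (by simp)⟩
  | wkL A Γ Δ h ih =>
      intro W k hΓ
      exact ih W k (fun B hB => hΓ B (List.mem_cons_of_mem _ hB))
  | wkR A Γ Δ h ih =>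
      intro W k hΓ
      obtain ⟨B, hB, hf⟩ := ih W k hΓ
      exact ⟨B, by simp [hB], hf⟩
  | ctrL A Γ Δ h ih =>
      intro W k hΓ
      refine ih W k ?_
      intro B hB
      rcases List.mem_cons.1 hB with rfl | hB
      · exact hΓ B (by simp)
      · rcases List.mem_cons.1 hB with rfl | hB
        · exact hΓ B (by simp)
        · exact hΓ B (List.mem_cons_of_mem _ hB)
  | ctrR A Γ Δ h ih =>
      intro W k hΓ
      obtain ⟨B, hB, hf⟩ := ih W k hΓ
      refine ⟨B, ?_, hf⟩
      simp only [List.mem_append, List.mem_cons, List.mem_singleton] at hB ⊢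
      tauto
  | exch Γ Γ' Δ Δ' h pΓ pΔ ih =>
      intro W k hΓ
      obtain ⟨B, hB, hf⟩ := ih W k (fun A hA => hΓ A (pΓ.mem_iff.1 hA))
      exact ⟨B, pΔ.mem_iff.1 hB, hf⟩
  | cut A Γ Δ Pi Sg h1 h2 ih1 ih2 =>
      intro W k hΓ
      obtain ⟨B, hB, hf⟩ := ih1 W k (fun C hC => hΓ C (by simp [hC]))
      rcases List.mem_append.1 hB with hB | hB
      · exact ⟨B, by simp [hB], hf⟩
      · simp only [List.mem_singleton] at hB
        subst hB
        have hPi : ∀ D ∈ B :: Pi, Force W k D := by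
          intro D hD
          rcases List.mem_cons.1 hD with rfl | hD
          · exact hf
          · exact hΓ D (by simp [hD])
        obtain ⟨C, hC, hfC⟩ := ih2 W k hPi
        exact ⟨C, by simp [hC], hfC⟩
  | andL1 A B Γ Δ h ih =>
      intro W k hΓ
      refine ih W k ?_
      intro C hC
      rcases List.mem_cons.1 hC with rfl | hC
      · exact (hΓ (Fm.and B C) (by simp)).2
      · exact hΓ C (List.mem_cons_of_mem _ hC)
  | andL2 A B Γ Δ h ih =>
      intro W k hΓ
      refine ih W k ?_
      intro C hC
      rcases List.mem_cons.1 hC with rfl | hC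
      · exact (hΓ (Fm.and C B) (by simp)).1
      · exact hΓ C (List.mem_cons_of_mem _ hC)
  | andR A B Γ Δ h1 h2 ih1 ih2 =>
      intro W k hΓ
      obtain ⟨C, hC, hfC⟩ := ih1 W k hΓ
      rcases List.mem_append.1 hC with hC | hC
      · exact ⟨C, by simp [hC], hfC⟩
      · simp only [List.mem_singleton] at hC; subst hC
        obtain ⟨D, hD, hfD⟩ := ih2 W k hΓ
        rcases List.mem_append.1 hD with hD | hD
        · exact ⟨D, by simp [hD], hfD⟩
        · simp only [List.mem_singleton] at hD; subst hD
          exact ⟨Fm.and C D, by simp, hfC, hfD⟩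
  | orL A B Γ Δ h1 h2 ih1 ih2 =>
      intro W k hΓ
      have htail : ∀ C ∈ Γ, Force W k C := fun C hC => hΓ C (List.mem_cons_of_mem _ hC)
      rcases hΓ (Fm.or A B) (by simp) with hA | hB
      · refine ih1 W k ?_
        intro C hC
        rcases List.mem_cons.1 hC with rfl | hC
        · exact hA
        · exact htail C hC
      · refine ih2 W k ?_
        intro C hC
        rcases List.mem_cons.1 hC with rfl | hC
        · exact hB
        · exact htail C hC
  | orR1 A B Γ Δ h ih =>
      intro W k hΓ
      obtain ⟨C, hC, hfC⟩ := ih W k hΓ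
      rcases List.mem_append.1 hC with hC | hC
      · exact ⟨C, by simp [hC], hfC⟩
      · simp only [List.mem_singleton] at hC; subst hC
        exact ⟨Fm.or C B, by simp, Or.inl hfC⟩
  | orR2 A B Γ Δ h ih =>
      intro W k hΓ
      obtain ⟨C, hC, hfC⟩ := ih W k hΓ
      rcases List.mem_append.1 hC with hC | hC
      · exact ⟨C, by simp [hC], hfC⟩
      · simp only [List.mem_singleton] at hC; subst hC
        exact ⟨Fm.or B C, by simp, Or.inr hfC⟩
  | impL A B Γ Δ Pi Sg h1 h2 ih1 ih2 =>
      intro W k hΓ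
      obtain ⟨C, hC, hfC⟩ := ih1 W k (fun D hD => hΓ D (by simp [hD]))
      rcases List.mem_append.1 hC with hC | hC
      · exact ⟨C, by simp [hC], hfC⟩
      · simp only [List.mem_singleton] at hC; subst hC
        have himp : Force W k (Fm.imp C B) := hΓ (Fm.imp C B) (by simp)
        obtain ⟨k2, hk2, hk2B⟩ := himp k (W.le_refl k) hfC
        have hPi : ∀ E ∈ B :: Pi, Force W k2 E := by
          intro E hE
          rcases List.mem_cons.1 hE with rfl | hE
          · exact hk2B
          · exact force_mono W E k k2 hk2 (hΓ E (by simp [hE]))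
        obtain ⟨D, hD, hfD⟩ := ih2 W k2 hPi
        refine ⟨Fm.dneg D, ?_, force_dneg_of_assertible W D k ⟨k2, hfD⟩⟩
        simp only [List.mem_append, List.mem_map]
        exact Or.inr ⟨D, hD, rfl⟩
  | impR A B Γ Δ h ih =>
      intro W k hΓ
      by_cases himp : Force W k (Fm.imp A B)
      · exact ⟨Fm.imp A B, by simp, himp⟩
      · simp only [Force, not_forall] at himp
        push_neg at himp
        obtain ⟨k', hk', hk'A, hnB⟩ := himp
        have hΓ' : ∀ E ∈ Γ ++ [A], Force W k' E := by
          intro E hE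
          rcases List.mem_append.1 hE with hE | hE
          · exact force_mono W E k k' hk' (hΓ E hE)
          · simp only [List.mem_singleton] at hE; subst hE
            exact hk'A
        obtain ⟨C, hC, hfC⟩ := ih W k' hΓ'
        rcases List.mem_cons.1 hC with rfl | hC
        · exfalso
          have hnegB : Force W k' (Fm.neg B) := by
            intro m hm hmB
            exact absurd hmB (hnB m hm)
          obtain ⟨_, _, hf⟩ := hfC k' (W.le_refl k') hnegB
          exact hf
        · refine ⟨Fm.dneg C, ?_, force_dneg_of_assertible W C k ⟨k', hfC⟩⟩
          simp only [List.mem_cons, List.mem_map]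
          exact Or.inr ⟨C, hC, rfl⟩
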